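/- Corollary (complete independence): for A ⊆ V with |A| > 1, the variables (X_v)_{v∈A} are mutually independent if and only if γ_D = 0 for every D ⊆ A with |D| > 1. -/

import Mathlib

open Finset

/-- Probability that the subvector `X_A` shows the cell pattern `i ⊆ A`
(coordinates in `i` equal to 1, coordinates in `A \ i` equal to 0), for a
binary random vector whose joint distribution on `{0,1}^V` is encoded by the
vector `π` indexed by subsets of `V`. -/
def cellProb {V : Type*} [Fintype V] [DecidableEq V]
    (π : Finset V → ℝ) (A i : Finset V) : ℝ :=
  ∑ H ∈ univ.powerset.filter (fun H => H ∩ A = i), π H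

/-- The mean parameter: `μ_D = P(X_D = 1_D)`. -/
def mu {V : Type*} [Fintype V] [DecidableEq V]
    (π : Finset V → ℝ) (D : Finset V) : ℝ :=
  ∑ H ∈ univ.powerset.filter (fun H => D ⊆ H), π H

/-- The log-mean linear parameter `γ_D = Σ_{E ⊆ D} (-1)^{|D\E|} log μ_E`. -/
noncomputable def gam {V : Type*} [Fintype V] [DecidableEq V]
    (π : Finset V → ℝ) (D : Finset V) : ℝ :=
  ∑ E ∈ D.powerset, (-1 : ℝ) ^ (D \ E).card * Real.log (mu π E)

/-!
Both sides are equivalent to the multiplicativity `μ_D = ∏_{v ∈ D} μ_{v}` for all `D ⊆ A`.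
The cell probabilities of `X_A` and the moments `μ_D`, `D ⊆ A`, determine each other by
inclusion–exclusion, and under this correspondence the product of the one-dimensional marginals
matches the product of the `μ_{v}`. On the other side, `γ` is the Möbius transform of `log μ` on the
Boolean lattice, so `log μ_D = ∑_{E ⊆ D} γ_E`; as `log μ_∅ = 0`, `log μ` is additive on the subsets
of `A` exactly when `γ_E = 0` for all `E ⊆ A` with `|E| > 1`.
-/

namespace Finset

variable {α : Type*} [DecidableEq α] {R : Type*} [CommRing R]

theorem sum_Icc_eq_sum_powerset_sdiff {M : Type*} [AddCommMonoid M] {a b : Finset α}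
    (h : a ⊆ b) (F : Finset α → M) :
    ∑ k ∈ Icc a b, F k = ∑ t ∈ (b \ a).powerset, F (a ∪ t) := by
  rw [Icc_eq_image_powerset h, sum_image]
  intro s hs t ht hst
  rw [mem_coe, mem_powerset, subset_sdiff] at hs ht
  rw [← union_sdiff_cancel_left hs.2.symm, ← union_sdiff_cancel_left ht.2.symm]
  exact congrArg (· \ a) hst

theorem sum_Icc_neg_one_pow_card_sdiff_left {a b : Finset α} (h : a ⊆ b) :
    ∑ k ∈ Icc a b, (-1 : R) ^ #(k \ a) = if a = b then 1 else 0 := by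
  have hcast := congrArg (Int.cast : ℤ → R) (sum_powerset_neg_one_pow_card (x := b \ a))
  push_cast at hcast
  rw [sum_Icc_eq_sum_powerset_sdiff h, sum_congr rfl fun t ht => by
    rw [union_sdiff_cancel_left (subset_sdiff.1 (mem_powerset.1 ht)).2.symm], hcast]
  exact if_congr (sdiff_eq_empty_iff_subset.trans ⟨h.antisymm, fun hab => hab ▸ Subset.rfl⟩)
    rfl rfl

theorem sum_Icc_neg_one_pow_card_sdiff_right {a b : Finset α} (h : a ⊆ b) :
    ∑ k ∈ Icc a b, (-1 : R) ^ #(b \ k) = if a = b then 1 else 0 := by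
  have hsign : ∀ k ∈ Icc a b, (-1 : R) ^ #(b \ k) = (-1) ^ #(b \ a) * (-1) ^ #(k \ a) := by
    intro k hk
    obtain ⟨hak, hkb⟩ := mem_Icc.1 hk
    have hcard : #(b \ a) = #(b \ k) + #(k \ a) := by
      rw [card_sdiff_of_subset h, card_sdiff_of_subset hkb, card_sdiff_of_subset hak]
      have := card_le_card hak
      have := card_le_card hkb
      omega
    rw [hcard, pow_add, mul_assoc, ← pow_add, ← two_mul, pow_mul, neg_one_sq, one_pow, mul_one]
  rw [sum_congr rfl hsign, ← mul_sum, sum_Icc_neg_one_pow_card_sdiff_left h]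
  split_ifs with hab <;> simp [hab]

def moebiusTransform (f : Finset α → R) (D : Finset α) : R :=
  ∑ E ∈ D.powerset, (-1 : R) ^ #(D \ E) * f E

theorem sum_comm_powerset_powerset {M : Type*} [AddCommMonoid M] (D : Finset α)
    (φ : Finset α → Finset α → M) :
    ∑ E ∈ D.powerset, ∑ F ∈ E.powerset, φ E F = ∑ F ∈ D.powerset, ∑ E ∈ Icc F D, φ E F :=
  sum_comm' fun E F => by
    simp only [mem_powerset, mem_Icc]
    exact ⟨fun h => ⟨⟨h.2, h.1⟩, h.2.trans h.1⟩, fun h => ⟨h.1.2, h.1.1⟩⟩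

theorem sum_powerset_moebiusTransform (f : Finset α → R) (D : Finset α) :
    ∑ E ∈ D.powerset, moebiusTransform f E = f D := by
  simp only [moebiusTransform]
  rw [sum_comm_powerset_powerset, sum_congr rfl fun F hF => by
    rw [← sum_mul, sum_Icc_neg_one_pow_card_sdiff_left (mem_powerset.1 hF)]]
  simp

theorem moebiusTransform_sum_powerset (g : Finset α → R) (D : Finset α) :
    moebiusTransform (fun E => ∑ F ∈ E.powerset, g F) D = g D := by
  simp only [moebiusTransform, mul_sum]
  rw [sum_comm_powerset_powerset, sum_congr rfl fun F hF => by
    rw [← sum_mul, sum_Icc_neg_one_pow_card_sdiff_right (mem_powerset.1 hF)]]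
  simp

theorem sum_powerset_eq_add_sum_singleton {M : Type*} [AddCommMonoid M] {D : Finset α}
    {g : Finset α → M} (hg : ∀ E ⊆ D, 1 < #E → g E = 0) :
    ∑ E ∈ D.powerset, g E = g ∅ + ∑ v ∈ D, g {v} := by
  have hsub : insert ∅ (D.image singleton) ⊆ D.powerset := by
    simp [insert_subset_iff, image_subset_iff]
  rw [← sum_subset hsub fun E hE hE' => hg E (mem_powerset.1 hE) ?large,
    sum_insert (by simp), sum_image singleton_injective.injOn]
  case large =>
    simp only [mem_insert, mem_image, not_or] at hE'
    by_contra hle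
    obtain h0 | h1 : #E = 0 ∨ #E = 1 := by omega
    · exact hE'.1 (card_eq_zero.1 h0)
    · obtain ⟨v, rfl⟩ := card_eq_one.1 h1
      exact hE'.2 ⟨v, by simpa using hE, rfl⟩

theorem additive_iff_moebiusTransform_eq_zero {f : Finset α → R} (hf : f ∅ = 0) (A : Finset α) :
    (∀ D ⊆ A, f D = ∑ v ∈ D, f {v}) ↔ ∀ D ⊆ A, 1 < #D → moebiusTransform f D = 0 := by
  constructor
  · intro hadd D hDA hD
    let g : Finset α → R := fun E => if #E = 1 then f E else 0
    have hfg : ∀ E ⊆ D, f E = ∑ F ∈ E.powerset, g F := by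
      intro E hED
      rw [sum_powerset_eq_add_sum_singleton fun F _ hF => if_neg hF.ne', hadd E (hED.trans hDA)]
      simp
    calc moebiusTransform f D = moebiusTransform (fun E => ∑ F ∈ E.powerset, g F) D :=
          sum_congr rfl fun E hE => by rw [hfg E (mem_powerset.1 hE)]
      _ = g D := moebiusTransform_sum_powerset g D
      _ = 0 := if_neg hD.ne'
  · intro hzero D hDA
    have hempty : moebiusTransform f ∅ = 0 := by simp [moebiusTransform, hf]
    have hsingleton (v : α) : moebiusTransform f {v} = f {v} := by
      rw [moebiusTransform, ← insert_empty, sum_powerset_insert (notMem_empty v)]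
      simp [hf]
    rw [← sum_powerset_moebiusTransform f D,
      sum_powerset_eq_add_sum_singleton fun E hED hE => hzero E (hED.trans hDA) hE]
    simp only [hempty, hsingleton, zero_add]


theorem prod_mul_prod_one_sub_eq_sum_powerset (x : α → R) (i A : Finset α) :
    (∏ v ∈ i, x v) * ∏ v ∈ A \ i, (1 - x v) =
      ∑ t ∈ (A \ i).powerset, (-1) ^ #t * ∏ v ∈ i ∪ t, x v := by
  rw [prod_sub, mul_sum]
  refine sum_congr rfl fun t ht => ?_
  rw [prod_const_one, mul_one, prod_union (subset_sdiff.1 (mem_powerset.1 ht)).2.symm]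
  ring

theorem sum_Icc_prod_mul_prod_one_sub (x : α → R) {D A : Finset α} (hDA : D ⊆ A) :
    ∑ j ∈ Icc D A, (∏ v ∈ j, x v) * ∏ v ∈ A \ j, (1 - x v) = ∏ v ∈ D, x v := by
  rw [sum_Icc_eq_sum_powerset_sdiff hDA]
  have hsplit : ∀ t ∈ (A \ D).powerset,
      (∏ v ∈ D ∪ t, x v) * ∏ v ∈ A \ (D ∪ t), (1 - x v) =
        (∏ v ∈ D, x v) * ((∏ v ∈ t, x v) * ∏ v ∈ (A \ D) \ t, (1 - x v)) := by
    intro t ht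
    rw [prod_union (subset_sdiff.1 (mem_powerset.1 ht)).2.symm, sdiff_sdiff_left, sup_eq_union,
      mul_assoc]
  rw [sum_congr rfl hsplit, ← mul_sum, ← prod_add]
  simp

end Finset

section CellProbabilities

variable {V : Type*} [Fintype V] [DecidableEq V] {π : Finset V → ℝ}

theorem cellProb_singleton_self (v : V) : cellProb π {v} {v} = mu π {v} := by
  simp only [cellProb, mu, inter_eq_right]

theorem cellProb_singleton_empty (hsum : ∑ H ∈ (univ : Finset V).powerset, π H = 1) (v : V) :
    cellProb π {v} ∅ = 1 - mu π {v} := by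
  rw [← hsum, ← sum_filter_add_sum_filter_not _ (fun H => {v} ⊆ H), mu, add_sub_cancel_left,
    cellProb]
  refine sum_congr (filter_congr fun H _ => ?_) fun _ _ => rfl
  simp [eq_empty_iff_forall_notMem, singleton_subset_iff]

theorem prod_cellProb_singleton (hsum : ∑ H ∈ (univ : Finset V).powerset, π H = 1)
    {i A : Finset V} (hiA : i ⊆ A) :
    ∏ v ∈ A, cellProb π {v} (i ∩ {v}) = (∏ v ∈ i, mu π {v}) * ∏ v ∈ A \ i, (1 - mu π {v}) := by
  rw [← union_sdiff_of_subset hiA, prod_union disjoint_sdiff, union_sdiff_of_subset hiA]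
  congr 1
  · refine prod_congr rfl fun v hv => ?_
    rw [inter_singleton_of_mem hv, cellProb_singleton_self]
  · refine prod_congr rfl fun v hv => ?_
    rw [inter_singleton_of_notMem (mem_sdiff.1 hv).2, cellProb_singleton_empty hsum]

theorem mu_eq_sum_Icc_cellProb {D A : Finset V} (hDA : D ⊆ A) :
    mu π D = ∑ j ∈ Icc D A, cellProb π A j := by
  rw [mu, ← sum_fiberwise_of_maps_to (g := (· ∩ A)) (t := Icc D A) fun H hH =>
    mem_Icc.2 ⟨subset_inter (mem_filter.1 hH).2 hDA, inter_subset_right⟩]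
  refine sum_congr rfl fun j hj => ?_
  rw [cellProb, filter_filter]
  refine sum_congr (filter_congr fun H _ => ?_) fun _ _ => rfl
  exact ⟨And.right, fun hH => ⟨(mem_Icc.1 hj).1.trans (hH ▸ inter_subset_left), hH⟩⟩

theorem cellProb_eq_sum_powerset_mu {i A : Finset V} (hiA : i ⊆ A) :
    cellProb π A i = ∑ t ∈ (A \ i).powerset, (-1) ^ #t * mu π (i ∪ t) := by
  have hindicator : ∀ H : Finset V, (if H ∩ A = i then 1 else 0 : ℝ) =
      ∑ t ∈ (A \ i).powerset, (-1) ^ #t * if i ∪ t ⊆ H then 1 else 0 := by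
    intro H
    have hcell : H ∩ A = i ↔ (∀ v ∈ i, v ∈ H) ∧ ∀ v ∈ A \ i, v ∉ H := by grind
    have hcompl (v : V) : (1 : ℝ) - (if v ∈ H then 1 else 0) = if v ∉ H then 1 else 0 := by
      split_ifs <;> simp
    calc (if H ∩ A = i then 1 else 0 : ℝ)
        = (∏ v ∈ i, if v ∈ H then 1 else 0) *
            ∏ v ∈ A \ i, (1 - if v ∈ H then (1 : ℝ) else 0) := by
          simp only [hcompl, prod_boole, ite_zero_mul_ite_zero, mul_one, hcell]
      _ = ∑ t ∈ (A \ i).powerset, (-1) ^ #t * ∏ v ∈ i ∪ t, if v ∈ H then 1 else 0 :=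
          prod_mul_prod_one_sub_eq_sum_powerset _ i A
      _ = ∑ t ∈ (A \ i).powerset, (-1) ^ #t * if i ∪ t ⊆ H then 1 else 0 := by
          simp only [prod_boole]
          rfl
  calc cellProb π A i = ∑ H ∈ univ.powerset, π H * if H ∩ A = i then 1 else 0 := by
        simp only [cellProb, sum_filter, mul_ite, mul_one, mul_zero]
    _ = ∑ t ∈ (A \ i).powerset,
          (-1) ^ #t * ∑ H ∈ univ.powerset, π H * if i ∪ t ⊆ H then 1 else 0 := by
        simp only [hindicator, mul_sum]
        rw [sum_comm]
        exact sum_congr rfl fun t _ => sum_congr rfl fun H _ => mul_left_comm _ _ _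
    _ = ∑ t ∈ (A \ i).powerset, (-1) ^ #t * mu π (i ∪ t) := by
        simp only [mu, sum_filter, mul_ite, mul_one, mul_zero]

theorem cellProb_eq_prod_iff_mu_eq_prod (hsum : ∑ H ∈ (univ : Finset V).powerset, π H = 1)
    (A : Finset V) :
    (∀ i ⊆ A, cellProb π A i = ∏ v ∈ A, cellProb π {v} (i ∩ {v})) ↔
      ∀ D ⊆ A, mu π D = ∏ v ∈ D, mu π {v} := by
  constructor
  · intro hcell D hDA
    rw [mu_eq_sum_Icc_cellProb hDA, ← sum_Icc_prod_mul_prod_one_sub (fun v => mu π {v}) hDA]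
    refine sum_congr rfl fun j hj => ?_
    rw [hcell j (mem_Icc.1 hj).2, prod_cellProb_singleton hsum (mem_Icc.1 hj).2]
  · intro hmu i hiA
    rw [prod_cellProb_singleton hsum hiA, prod_mul_prod_one_sub_eq_sum_powerset,
      cellProb_eq_sum_powerset_mu hiA]
    refine sum_congr rfl fun t ht => ?_
    rw [hmu _ (union_subset hiA ((mem_powerset.1 ht).trans sdiff_subset))]

theorem mu_pos (hpos : ∀ H, 0 < π H) (D : Finset V) : 0 < mu π D :=
  sum_pos (fun H _ => hpos H) ⟨univ, by simp⟩

theorem mu_empty (hsum : ∑ H ∈ (univ : Finset V).powerset, π H = 1) : mu π ∅ = 1 := by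
  rw [mu, filter_true_of_mem fun _ _ => empty_subset _, hsum]

theorem mu_eq_prod_iff_log_mu_eq_sum (hpos : ∀ H, 0 < π H) (D : Finset V) :
    mu π D = ∏ v ∈ D, mu π {v} ↔ Real.log (mu π D) = ∑ v ∈ D, Real.log (mu π {v}) := by
  rw [← Real.log_prod fun v _ => (mu_pos hpos _).ne']
  exact (Real.log_injOn_pos.eq_iff (mu_pos hpos D) (prod_pos fun v _ => mu_pos hpos _)).symm

theorem gam_eq_moebiusTransform : gam π = moebiusTransform fun E => Real.log (mu π E) := rfl

end CellProbabilities

theorem complete_independence_iff_gamma_zero_general {V : Type*} [Fintype V] [DecidableEq V]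
    (π : Finset V → ℝ) (hpos : ∀ H : Finset V, 0 < π H)
    (hsum : ∑ H ∈ (univ : Finset V).powerset, π H = 1)
    (A : Finset V) :
    (∀ i ⊆ A, cellProb π A i = ∏ v ∈ A, cellProb π {v} (i ∩ {v})) ↔
      (∀ D ⊆ A, 1 < D.card → gam π D = 0) := by
  have hlog_empty : Real.log (mu π ∅) = 0 := by rw [mu_empty hsum, Real.log_one]
  rw [cellProb_eq_prod_iff_mu_eq_prod hsum]
  simp only [mu_eq_prod_iff_log_mu_eq_sum hpos, gam_eq_moebiusTransform]
  exact additive_iff_moebiusTransform_eq_zero hlog_empty A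

theorem complete_independence_iff_gamma_zero {V : Type*} [Fintype V] [DecidableEq V]
    (π : Finset V → ℝ) (hpos : ∀ H : Finset V, 0 < π H)
    (hsum : ∑ H ∈ (univ : Finset V).powerset, π H = 1)
    (A : Finset V) (hA : 1 < A.card) :
    (∀ i ⊆ A, cellProb π A i = ∏ v ∈ A, cellProb π {v} (i ∩ {v})) ↔
      (∀ D ⊆ A, 1 < D.card → gam π D = 0) :=
  complete_independence_iff_gamma_zero_general π hpos hsum A
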